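/- Let G=(V,E) be a finite simple graph and U ⊆ V. Define the graph G̃=(Ṽ,Ẽ) by Ṽ := {q,r,s,t} ∪ {w_v : v ∈ V} ∪ {x_v : v ∈ V} and Ẽ := {{w_v, x_u} : v,u ∈ V, u ∈ N_G[v]} ∪ {{x_v, q} : v ∈ V} ∪ {{q,r},{r,s},{s,t}}, and define f : Ṽ → {0,1,2} by f := 2·χ_{{s} ∪ {w_v : v ∈ U}} + χ_{{q,t}}. Then there exists a minimal dominating set D of G with U ⊆ D if and only if there exists a minimal maximal Roman dominating function g on G̃ with f ≤ g. -/

import Mathlib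

open Set

variable {V : Type*}

/-- The set of vertices on which `f` takes value `i`. -/
def Vlevel (f : V → ℕ) (i : ℕ) : Set V := {v | f v = i}

/-- Closed neighborhood of `v` inside the induced subgraph `G[W]`. -/
def closedNbhdIn (G : SimpleGraph V) (W : Set V) (v : V) : Set V :=
  {u ∈ W | u = v ∨ G.Adj u v}

/-- Closed neighborhood of a set `A` inside the induced subgraph `G[W]`. -/
def closedNbhdSetIn (G : SimpleGraph V) (W A : Set V) : Set V :=
  ⋃ u ∈ A, closedNbhdIn G W u

/-- Private neighborhood `P_{G[W],A}(v) = N[v] \ N[A \ {v}]` inside `G[W]`. -/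
def privNbhd (G : SimpleGraph V) (W A : Set V) (v : V) : Set V :=
  closedNbhdIn G W v \ closedNbhdSetIn G W (A \ {v})

/-- Closed neighborhood `N[v]` in `G`. -/
def closedNbhd (G : SimpleGraph V) (v : V) : Set V := {u | u = v ∨ G.Adj u v}

/-- Closed neighborhood `N[A]` of a set in `G`. -/
def closedNbhdSet (G : SimpleGraph V) (A : Set V) : Set V := ⋃ v ∈ A, closedNbhd G v

/-- Open neighborhood `N(A)` of a set in `G`. -/
def openNbhdSet (G : SimpleGraph V) (A : Set V) : Set V := ⋃ v ∈ A, G.neighborSet v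

/-- Characteristic function of a set. -/
noncomputable def chi (S : Set V) : V → ℕ := S.indicator 1

/-- Roman dominating function: values in {0,1,2}, and every vertex of value 0 has
a neighbor of value 2. -/
def IsRDF (G : SimpleGraph V) (f : V → ℕ) : Prop :=
  (∀ v, f v ≤ 2) ∧ ∀ v, f v = 0 → ∃ u, G.Adj v u ∧ f u = 2

/-- `f` is minimal with respect to the pointwise order among functions with property `P`. -/
def MinimalWrt (P : (V → ℕ) → Prop) (f : V → ℕ) : Prop :=
  P f ∧ ∀ g, P g → g ≤ f → g = f

/-- `C_{P,G}[A]`: minimal functions with property `P` whose set of vertices of value 2 is `A`. -/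
def CSet (P : (V → ℕ) → Prop) (A : Set V) : Set (V → ℕ) :=
  {f | MinimalWrt P f ∧ Vlevel f 2 = A}

/-- Nice Roman domination property. -/
def IsNiceRDP (G : SimpleGraph V) (P : (V → ℕ) → Prop) : Prop :=
  (∀ f, P f → IsRDF G f) ∧
  (∀ f, P f → ∀ v ∈ Vlevel f 0, P (f + chi {v})) ∧
  (∀ f, P f → ∀ v ∈ Vlevel f 2,
    (P (f - chi {v}) ↔ privNbhd G (Vlevel f 0 ∪ Vlevel f 2) (Vlevel f 2) v ⊆ {v}))

/-- Maximal Roman dominating function: an Rdf such that `V_0(f)` is not a dominating set. -/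
def IsMRDF (G : SimpleGraph V) (f : V → ℕ) : Prop :=
  IsRDF G f ∧ closedNbhdSet G (Vlevel f 0) ≠ Set.univ

/-- Total Roman dominating function: an Rdf such that `G[V_1(f) ∪ V_2(f)]` has no isolated
vertices. -/
def IsTRDF (G : SimpleGraph V) (f : V → ℕ) : Prop :=
  IsRDF G f ∧ ∀ v ∈ Vlevel f 1 ∪ Vlevel f 2, ∃ u ∈ Vlevel f 1 ∪ Vlevel f 2, G.Adj v u

/-- Connected Roman dominating function: an Rdf such that `G[V_1(f) ∪ V_2(f)]` is connected. -/
def IsCRDF (G : SimpleGraph V) (f : V → ℕ) : Prop :=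
  IsRDF G f ∧ (G.induce (Vlevel f 1 ∪ Vlevel f 2)).Connected

/-- Vertex set of the graph `G̃`: `Sum.inl 0 = q`, `Sum.inl 1 = r`, `Sum.inl 2 = s`,
`Sum.inl 3 = t`, `Sum.inr (Sum.inl v) = w_v`, `Sum.inr (Sum.inr v) = x_v`. -/
abbrev TildeVert (V : Type*) := (Fin 4) ⊕ (V ⊕ V)

/-- One direction of the edges of `G̃`: `w_v x_u` for `u ∈ N_G[v]`, `x_v q`,
`q r`, `r s`, `s t`. -/
def TildeRel (G : SimpleGraph V) : TildeVert V → TildeVert V → Prop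
  | Sum.inr (Sum.inl v), Sum.inr (Sum.inr u) => u = v ∨ G.Adj v u
  | Sum.inr (Sum.inr _), Sum.inl i => i = 0
  | Sum.inl i, Sum.inl j => (i = 0 ∧ j = 1) ∨ (i = 1 ∧ j = 2) ∨ (i = 2 ∧ j = 3)
  | _, _ => False

/-- The graph `G̃` built from `G`. -/
def TildeGraph (G : SimpleGraph V) : SimpleGraph (TildeVert V) where
  Adj x y := TildeRel G x y ∨ TildeRel G y x
  symm := ⟨fun _ _ h => Or.symm h⟩
  loopless := by
    constructor
    rintro (i | v | v) h
    · rcases h with h | h <;>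
        rcases h with ⟨h1, h2⟩ | ⟨h1, h2⟩ | ⟨h1, h2⟩ <;> subst h1 <;>
        exact absurd h2 (by decide)
    · rcases h with h | h <;> exact h
    · rcases h with h | h <;> exact h

/-- The presolution `f = 2·χ_{{s} ∪ {w_v : v ∈ U}} + χ_{{q,t}}` on `G̃`. -/
noncomputable def TildeF (U : Set V) : TildeVert V → ℕ
  | Sum.inl i => if i = 2 then 2 else if i = 0 ∨ i = 3 then 1 else 0
  | Sum.inr (Sum.inl v) => U.indicator (fun _ => 2) v
  | Sum.inr (Sum.inr _) => 0

/-- `D` is a dominating set of `G`. -/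
def IsDomSet (G : SimpleGraph V) (D : Set V) : Prop :=
  ∀ v : V, ∃ u ∈ D, u = v ∨ G.Adj u v

/-- `D` is a minimal dominating set of `G`. -/
def IsMinDomSet (G : SimpleGraph V) (D : Set V) : Prop :=
  IsDomSet G D ∧ ∀ D' ⊆ D, IsDomSet G D' → D' = D

/-!
On the path `q r s t` a minimal mRdf `g ≥ f` is forced to take the values `1, 0, 2, 1`: any
other choice could be lowered at one vertex to an Rdf that still leaves `t` undominated by `V₀`.
Lowering `t` itself to `0` still gives an Rdf, so by minimality its `V₀` dominates `G̃`; this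
forces `g (x_v) = 0`, and then `g (w_v) ∈ {1, 2}`. The Rdf condition at the vertices `x_v` says
exactly that `D = {v | g (w_v) = 2}` dominates `G`, and lowering a single `w_v` to `1` shows
that `D` is minimal. Conversely a minimal dominating set `D ⊇ U` gives the function with these
values, and every mRdf below it is again of this form, for a dominating subset of `D`.
-/

section RomanDomination

variable {G : SimpleGraph V} {g : V → ℕ}

theorem mem_closedNbhdSet {A : Set V} {z : V} :
    z ∈ closedNbhdSet G A ↔ ∃ v ∈ A, z = v ∨ G.Adj z v := by
  simp [closedNbhdSet, closedNbhd]

theorem IsRDF.update_of_lt [DecidableEq V] (hg : IsRDF G g) {a : V} {c : ℕ} (hc : c < g a)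
    (h0 : c = 0 → ∃ u, G.Adj a u ∧ g u = 2)
    (hnb : g a = 2 → ∀ b, G.Adj a b → g b = 0 → ∃ u ≠ a, G.Adj b u ∧ g u = 2) :
    IsRDF G (Function.update g a c) := by
  refine ⟨fun b => ?_, fun b hb => ?_⟩
  · rcases eq_or_ne b a with rfl | hba
    · have := hg.1 b
      simp only [Function.update_self]; omega
    · simpa [hba] using hg.1 b
  · rcases eq_or_ne b a with rfl | hba
    · obtain ⟨u, hbu, hu⟩ := h0 (by simpa using hb)
      exact ⟨u, hbu, by rwa [Function.update_of_ne hbu.ne']⟩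
    · rw [Function.update_of_ne hba] at hb
      obtain ⟨u, hbu, hu⟩ := hg.2 b hb
      rcases eq_or_ne u a with rfl | hua
      · obtain ⟨u', hu'a, hbu', hu'⟩ := hnb hu b hbu.symm hb
        exact ⟨u', hbu', by rwa [Function.update_of_ne hu'a]⟩
      · exact ⟨u, hbu, by rwa [Function.update_of_ne hua]⟩

theorem MinimalWrt.closedNbhdSet_eq_univ (hg : MinimalWrt (IsMRDF G) g) {h : V → ℕ}
    (hh : IsRDF G h) (hle : h ≤ g) (hne : h ≠ g) : closedNbhdSet G (Vlevel h 0) = univ := by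
  by_contra hmax
  exact hne (hg.2 h ⟨hh, hmax⟩ hle)

end RomanDomination

namespace TildeVert

abbrev q : TildeVert V := Sum.inl 0
abbrev r : TildeVert V := Sum.inl 1
abbrev s : TildeVert V := Sum.inl 2
abbrev t : TildeVert V := Sum.inl 3
abbrev w (v : V) : TildeVert V := Sum.inr (Sum.inl v)
abbrev x (v : V) : TildeVert V := Sum.inr (Sum.inr v)

end TildeVert

open TildeVert

section TildeGraph

variable {G : SimpleGraph V} {h g : TildeVert V → ℕ}

theorem tildeGraph_adj_t {y : TildeVert V} : (TildeGraph G).Adj t y ↔ y = s := by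
  rcases y with j | v | v <;> simp [TildeGraph, TildeRel]

theorem tildeGraph_adj_s {y : TildeVert V} : (TildeGraph G).Adj s y ↔ y = r ∨ y = t := by
  rcases y with j | v | v <;> simp [TildeGraph, TildeRel]
  revert j; decide

theorem tildeGraph_adj_r {y : TildeVert V} : (TildeGraph G).Adj r y ↔ y = q ∨ y = s := by
  rcases y with j | v | v <;> simp [TildeGraph, TildeRel]
  revert j; decide

theorem tildeGraph_adj_q {y : TildeVert V} :
    (TildeGraph G).Adj q y ↔ y = r ∨ ∃ v, y = x v := by
  rcases y with j | v | v <;> simp [TildeGraph, TildeRel]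

theorem tildeGraph_adj_w {v : V} {y : TildeVert V} :
    (TildeGraph G).Adj (w v) y ↔ ∃ u, y = x u ∧ (v = u ∨ G.Adj v u) := by
  rcases y with j | u | u <;> simp [TildeGraph, TildeRel, eq_comm]

theorem tildeGraph_adj_x {v : V} {y : TildeVert V} :
    (TildeGraph G).Adj (x v) y ↔ y = q ∨ ∃ z, y = w z ∧ (z = v ∨ G.Adj z v) := by
  rcases y with j | u | u <;> simp [TildeGraph, TildeRel, eq_comm]

theorem tildeGraph_closedNbhdSet_zero_ne_univ (ht : h t ≠ 0) (hs : h s ≠ 0) :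
    closedNbhdSet (TildeGraph G) (Vlevel h 0) ≠ univ := by
  intro huniv
  obtain ⟨v, hv, rfl | htv⟩ := mem_closedNbhdSet.mp (huniv ▸ mem_univ t)
  · exact ht hv
  · rw [tildeGraph_adj_t.mp htv] at hv
    exact hs hv

theorem tildeGraph_closedNbhdSet_zero_eq_univ (hr : h r = 0) (hx : ∀ v, h (x v) = 0)
    (ht : h t = 0) :
    closedNbhdSet (TildeGraph G) (Vlevel h 0) = univ := by
  refine eq_univ_of_forall fun z => mem_closedNbhdSet.mpr ?_
  rcases z with j | v | v
  · fin_cases j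
    · exact ⟨r, hr, Or.inr (tildeGraph_adj_q.mpr (Or.inl rfl))⟩
    · exact ⟨r, hr, Or.inl rfl⟩
    · exact ⟨r, hr, Or.inr (tildeGraph_adj_s.mpr (Or.inl rfl))⟩
    · exact ⟨t, ht, Or.inl rfl⟩
  · exact ⟨x v, hx v, Or.inr (tildeGraph_adj_w.mpr ⟨v, rfl, Or.inl rfl⟩)⟩
  · exact ⟨x v, hx v, Or.inl rfl⟩

theorem IsRDF.tildeGraph_w_ne_zero (hh : IsRDF (TildeGraph G) h) (hx : ∀ v, h (x v) ≠ 2)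
    (v : V) : h (w v) ≠ 0 := fun h0 => by
  obtain ⟨u, hu, hu2⟩ := hh.2 _ h0
  obtain ⟨z, rfl, -⟩ := tildeGraph_adj_w.mp hu
  exact hx z hu2

theorem IsRDF.isDomSet_tildeGraph_w (hh : IsRDF (TildeGraph G) h) (hq : h q ≠ 2)
    (hx : ∀ v, h (x v) = 0) : IsDomSet G {v | h (w v) = 2} := by
  intro v
  obtain ⟨u, hu, hu2⟩ := hh.2 _ (hx v)
  rcases tildeGraph_adj_x.mp hu with rfl | ⟨z, rfl, hz⟩
  · exact absurd hu2 hq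
  · exact ⟨z, hu2, hz⟩

theorem MinimalWrt.apply_le_of_lowerable (hg : MinimalWrt (IsMRDF (TildeGraph G)) g)
    (hs : g s ≠ 0) (ht : g t ≠ 0) {a : TildeVert V} {c : ℕ} (hc : c ≠ 0 ∨ a ≠ s ∧ a ≠ t)
    (h0 : c = 0 → ∃ u, (TildeGraph G).Adj a u ∧ g u = 2)
    (hnb : g a = 2 → ∀ b, (TildeGraph G).Adj a b → g b = 0 →
      ∃ u ≠ a, (TildeGraph G).Adj b u ∧ g u = 2) :
    g a ≤ c := by
  classical
  by_contra! hlt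
  have hupd : ∀ b, g b ≠ 0 → c ≠ 0 ∨ a ≠ b → Function.update g a c b ≠ 0 := by
    intro b hb hcb
    rcases eq_or_ne a b with rfl | hab
    · simpa using hcb
    · rwa [Function.update_of_ne hab.symm]
  exact tildeGraph_closedNbhdSet_zero_ne_univ (hupd t ht (hc.imp_right (·.2)))
    (hupd s hs (hc.imp_right (·.1)))
    (hg.closedNbhdSet_eq_univ (hg.1.1.update_of_lt hlt h0 hnb)
      (update_le_self_iff.mpr hlt.le) (Function.update_ne_self_iff.mpr hlt.ne))

theorem MinimalWrt.tildeGraph_values (hg : MinimalWrt (IsMRDF (TildeGraph G)) g)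
    (hq : 1 ≤ g q) (hs : 2 ≤ g s) (ht : 1 ≤ g t) :
    g q = 1 ∧ g r = 0 ∧ g s = 2 ∧ g t = 1 ∧ (∀ v, g (x v) = 0) ∧ ∀ v, g (w v) ≠ 0 := by
  classical
  have hle2 := hg.1.1.1
  have g_s : g s = 2 := le_antisymm (hle2 s) hs
  have g_q : g q = 1 := by
    by_contra hq1
    have hq2 : g q = 2 := by have := hle2 q; omega
    have := hg.apply_le_of_lowerable (a := s) (c := 1) (by omega) (by omega)
      (Or.inl one_ne_zero) (by simp) fun _ b hb hb0 => by
        rcases tildeGraph_adj_s.mp hb with rfl | rfl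
        · exact ⟨q, by simp, tildeGraph_adj_r.mpr (Or.inl rfl), hq2⟩
        · omega
    omega
  have g_r : g r = 0 := Nat.le_zero.mp <| hg.apply_le_of_lowerable (by omega) (by omega)
    (Or.inr ⟨by simp, by simp⟩) (fun _ => ⟨s, tildeGraph_adj_r.mpr (Or.inr rfl), g_s⟩)
    fun _ b hb hb0 => by rcases tildeGraph_adj_r.mp hb with rfl | rfl <;> omega
  have g_t : g t = 1 := by
    have := hg.apply_le_of_lowerable (a := t) (c := 1) (by omega) (by omega)
      (Or.inl one_ne_zero) (by simp) fun _ b hb hb0 => by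
        rw [tildeGraph_adj_t.mp hb] at hb0
        omega
    omega
  have g_x_ne : ∀ v, g (x v) ≠ 2 := fun v hx2 => by
    have := hg.apply_le_of_lowerable (a := q) (c := 0) (by omega) (by omega)
      (Or.inr ⟨by simp, by simp⟩) (fun _ => ⟨x v, tildeGraph_adj_q.mpr (Or.inr ⟨v, rfl⟩), hx2⟩)
      (by omega)
    omega
  have g_w : ∀ v, g (w v) ≠ 0 := hg.1.1.tildeGraph_w_ne_zero g_x_ne
  -- Lowering `t` to `0` leaves an Rdf, whose `V₀` must dominate by minimality; in the closed
  -- neighbourhood of `x v` only `x v` itself can have value `0`.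
  have g_x : ∀ v, g (x v) = 0 := by
    intro v
    have huniv := hg.closedNbhdSet_eq_univ
      (hg.1.1.update_of_lt (a := t) (c := 0) (by omega)
        (fun _ => ⟨s, tildeGraph_adj_t.mpr rfl, g_s⟩) (by omega))
      (update_le_self_iff.mpr (Nat.zero_le _)) (Function.update_ne_self_iff.mpr (by omega))
    obtain ⟨z, hz0, rfl | hxz⟩ := mem_closedNbhdSet.mp (huniv ▸ mem_univ (x v))
    · simpa [Vlevel] using hz0
    · rcases tildeGraph_adj_x.mp hxz with rfl | ⟨z, rfl, -⟩
      · simp [Vlevel, g_q] at hz0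
      · exact absurd (by simpa [Vlevel] using hz0) (g_w z)
  exact ⟨g_q, g_r, g_s, g_t, g_x, g_w⟩

theorem MinimalWrt.isMinDomSet_tildeGraph_w (hg : MinimalWrt (IsMRDF (TildeGraph G)) g)
    (hq : 1 ≤ g q) (hs : 2 ≤ g s) (ht : 1 ≤ g t) : IsMinDomSet G {v | g (w v) = 2} := by
  obtain ⟨g_q, -, g_s, g_t, g_x, -⟩ := hg.tildeGraph_values hq hs ht
  refine ⟨hg.1.1.isDomSet_tildeGraph_w (by omega) g_x,
    fun D hD hdom => hD.antisymm fun v hv => ?_⟩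
  by_contra hvD
  have := hg.apply_le_of_lowerable (a := w v) (c := 1) (by omega) (by omega)
    (Or.inl one_ne_zero) (by simp) fun _ b hb hb0 => by
      obtain ⟨u, rfl, -⟩ := tildeGraph_adj_w.mp hb
      obtain ⟨z, hzD, hz⟩ := hdom u
      exact ⟨w z, by simpa using ne_of_mem_of_not_mem hzD hvD,
        tildeGraph_adj_x.mpr (Or.inr ⟨z, rfl, hz⟩), hD hzD⟩
  have hv2 : g (w v) = 2 := hv
  omega

theorem tildeF_le_iff {U : Set V} :
    TildeF U ≤ g ↔ 1 ≤ g q ∧ 2 ≤ g s ∧ 1 ≤ g t ∧ ∀ v ∈ U, 2 ≤ g (w v) := by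
  constructor
  · intro hfg
    exact ⟨by simpa [TildeF] using hfg q, by simpa [TildeF] using hfg s,
      by simpa [TildeF] using hfg t, fun v hv => by simpa [TildeF, hv] using hfg (w v)⟩
  · rintro ⟨hq, hs, ht, hw⟩ (j | v | v)
    · fin_cases j <;> simp [TildeF, *]
    · by_cases hv : v ∈ U <;> simp [TildeF, hv, hw]
    · simp [TildeF]

end TildeGraph

open Classical in
noncomputable def tildeMRDF (D : Set V) : TildeVert V → ℕ
  | Sum.inl i => if i = 1 then 0 else if i = 2 then 2 else 1
  | Sum.inr (Sum.inl v) => if v ∈ D then 2 else 1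
  | Sum.inr (Sum.inr _) => 0

section TildeMRDF

variable {G : SimpleGraph V} {D : Set V}

@[simp] theorem tildeMRDF_q : tildeMRDF D q = 1 := rfl
@[simp] theorem tildeMRDF_r : tildeMRDF D r = 0 := rfl
@[simp] theorem tildeMRDF_s : tildeMRDF D s = 2 := rfl
@[simp] theorem tildeMRDF_t : tildeMRDF D t = 1 := rfl
@[simp] theorem tildeMRDF_x (v : V) : tildeMRDF D (x v) = 0 := rfl

theorem tildeMRDF_w_of_mem {v : V} (hv : v ∈ D) : tildeMRDF D (w v) = 2 := by
  simp [tildeMRDF, hv]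

theorem tildeMRDF_w_of_notMem {v : V} (hv : v ∉ D) : tildeMRDF D (w v) = 1 := by
  simp [tildeMRDF, hv]

theorem isMRDF_tildeMRDF (hD : IsDomSet G D) : IsMRDF (TildeGraph G) (tildeMRDF D) := by
  refine ⟨⟨?_, ?_⟩, tildeGraph_closedNbhdSet_zero_ne_univ (by simp) (by simp)⟩
  · rintro (j | v | v)
    · fin_cases j <;> simp
    · by_cases hv : v ∈ D <;> simp [tildeMRDF_w_of_mem, tildeMRDF_w_of_notMem, hv]
    · simp
  · rintro (j | v | v) h0
    · fin_cases j <;> simp at h0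
      exact ⟨s, tildeGraph_adj_r.mpr (Or.inr rfl), rfl⟩
    · by_cases hv : v ∈ D <;> simp [tildeMRDF_w_of_mem, tildeMRDF_w_of_notMem, hv] at h0
    · obtain ⟨z, hzD, hz⟩ := hD v
      exact ⟨w z, tildeGraph_adj_x.mpr (Or.inr ⟨z, rfl, hz⟩), tildeMRDF_w_of_mem hzD⟩

theorem minimalWrt_tildeMRDF (hD : IsMinDomSet G D) :
    MinimalWrt (IsMRDF (TildeGraph G)) (tildeMRDF D) := by
  refine ⟨isMRDF_tildeMRDF hD.1, fun h ⟨hh, hmax⟩ hle => ?_⟩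
  have h_r : h r = 0 := Nat.le_zero.mp (by simpa using hle r)
  have h_x : ∀ v, h (x v) = 0 := fun v => Nat.le_zero.mp (by simpa using hle (x v))
  have h_t : h t = 1 := by
    have ht0 : h t ≠ 0 := fun ht0 => hmax (tildeGraph_closedNbhdSet_zero_eq_univ h_r h_x ht0)
    have : h t ≤ 1 := hle t
    omega
  have h_q_le : h q ≤ 1 := by simpa using hle q
  have h_s : h s = 2 := by
    obtain ⟨u, hu, hu2⟩ := hh.2 r h_r
    rcases tildeGraph_adj_r.mp hu with rfl | rfl
    · omega
    · exact hu2
  have h_q : h q = 1 := by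
    have : h q ≠ 0 := fun h0 => by
      obtain ⟨u, hu, hu2⟩ := hh.2 q h0
      rcases tildeGraph_adj_q.mp hu with rfl | ⟨v, rfl⟩ <;> simp_all
    omega
  have hD' : {v | h (w v) = 2} = D := by
    refine hD.2 _ (fun v hv => ?_) (hh.isDomSet_tildeGraph_w (by omega) h_x)
    by_contra hvD
    have h2 : h (w v) = 2 := hv
    have : h (w v) ≤ 1 := (hle (w v)).trans_eq (tildeMRDF_w_of_notMem hvD)
    omega
  have h_w : ∀ v, h (w v) = tildeMRDF D (w v) := by
    intro v
    by_cases hv : v ∈ D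
    · rw [tildeMRDF_w_of_mem hv]
      exact hD'.ge hv
    · have : h (w v) ≤ 1 := (hle (w v)).trans_eq (tildeMRDF_w_of_notMem hv)
      have := hh.tildeGraph_w_ne_zero (by simp [h_x]) v
      rw [tildeMRDF_w_of_notMem hv]
      omega
  funext z
  rcases z with j | v | v
  · fin_cases j <;> simp [h_q, h_r, h_s, h_t]
  · exact h_w v
  · simp [h_x]

end TildeMRDF

theorem stmt18_general (G : SimpleGraph V) (U : Set V) :
    (∃ D : Set V, IsMinDomSet G D ∧ U ⊆ D) ↔
    (∃ g : TildeVert V → ℕ, MinimalWrt (IsMRDF (TildeGraph G)) g ∧ TildeF U ≤ g) := by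
  constructor
  · rintro ⟨D, hD, hUD⟩
    refine ⟨tildeMRDF D, minimalWrt_tildeMRDF hD, tildeF_le_iff.mpr ⟨by simp, by simp, by simp,
      fun v hv => (tildeMRDF_w_of_mem (hUD hv)).ge⟩⟩
  · rintro ⟨g, hg, hfg⟩
    obtain ⟨hq, hs, ht, hU⟩ := tildeF_le_iff.mp hfg
    exact ⟨_, hg.isMinDomSet_tildeGraph_w hq hs ht,
      fun v hv => le_antisymm (hg.1.1.1 _) (hU v hv)⟩

/-- there is a minimal dominating set `D ⊇ U` of `G` iff there is a
minimal maximal Roman dominating function `g` on `G̃` with `f ≤ g`. -/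
theorem stmt18 [Fintype V] (G : SimpleGraph V) (U : Set V) :
    (∃ D : Set V, IsMinDomSet G D ∧ U ⊆ D) ↔
    (∃ g : TildeVert V → ℕ, MinimalWrt (IsMRDF (TildeGraph G)) g ∧ TildeF U ≤ g) :=
  stmt18_general G U
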